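/- Let m ≥ 1 and suppose X ⊆ ℝ^m is a conical limit set. If X contains a nonempty subset F with F ⊆ gd(F), then X is uncountable. -/
import Mathlib


open Filter Topology

/-- The open upper half-space over a normed space `V`: pairs `(t, v)` with `t > 0`. -/
def upperHalf (V : Type*) [NormedAddCommGroup V] : Set (ℝ × V) := {p | 0 < p.1}

/-- The conical limit set of `E ⊆ ℝ × V`: points `x` for which there are `C > 0` and a
sequence `(t_n, v_n)` in `E` with `t_n → 0`, `v_n → x` and `‖v_n - x‖ ≤ C * t_n`. -/
def conicalLimitSet {V : Type*} [NormedAddCommGroup V] (E : Set (ℝ × V)) : Set V :=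
  {x | ∃ C > 0, ∃ w : ℕ → ℝ × V, (∀ n, w n ∈ E) ∧
    Tendsto (fun n => (w n).1) atTop (𝓝 (0 : ℝ)) ∧
    Tendsto (fun n => (w n).2) atTop (𝓝 x) ∧
    ∀ n, ‖(w n).2 - x‖ ≤ C * (w n).1}

/-- `X ⊆ V` is a conical limit set if it is the conical limit set of some subset of the
upper half-space. -/
def IsConicalLimitSet {V : Type*} [NormedAddCommGroup V] (X : Set V) : Prop :=
  ∃ E ⊆ upperHalf V, conicalLimitSet E = X

/-- The set of good points of `F`: `z ∈ gd F` iff for every `ε > 0` there is `δ > 0`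
such that every `v` with `0 < ‖v - z‖ < δ` lies within `ε * ‖v - z‖` of a point of `F`. -/
def gd {V : Type*} [NormedAddCommGroup V] (F : Set V) : Set V :=
  {z | ∀ ε > 0, ∃ δ > 0, ∀ v, 0 < ‖v - z‖ → ‖v - z‖ < δ → ∃ x ∈ F, ‖x - v‖ < ε * ‖v - z‖}

private lemma ntri {V : Type*} [NormedAddCommGroup V] (a b c : V) :
    ‖a - c‖ ≤ ‖a - b‖ + ‖b - c‖ := by
  have := dist_triangle a b c
  simpa [dist_eq_norm] using this

set_option maxHeartbeats 1600000 in
/-- If a conical limit set `X ⊆ ℝ^m` contains a nonempty subset `F` with `F ⊆ gd F`,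
then `X` is uncountable. -/
theorem conicalLimitSet_uncountable_of_good_subset (m : ℕ) (hm : 1 ≤ m)
    (X : Set (EuclideanSpace ℝ (Fin m))) (hX : IsConicalLimitSet X)
    (F : Set (EuclideanSpace ℝ (Fin m))) (hFX : F ⊆ X) (hFne : F.Nonempty)
    (hgood : F ⊆ gd F) :
    ¬ X.Countable := by
  classical
  intro hc
  obtain ⟨E, hE, hXE⟩ := hX
  obtain ⟨z₀, hz₀F⟩ := hFne
  have hEpos : ∀ {p : ℝ × EuclideanSpace ℝ (Fin m)}, p ∈ E → 0 < p.1 := fun hp => hE hp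
  have hXne : X.Nonempty := ⟨z₀, hFX hz₀F⟩
  obtain ⟨f, hf⟩ := hc.exists_eq_range hXne
  -- a unit vector
  set e : EuclideanSpace ℝ (Fin m) := EuclideanSpace.single (⟨0, hm⟩ : Fin m) (1 : ℝ)
    with he_def
  have he : ‖e‖ = 1 := by rw [he_def, EuclideanSpace.norm_single]; norm_num
  -- the basic step of the construction
  have step : ∀ (z : EuclideanSpace ℝ (Fin m)) (η : ℝ) (a : EuclideanSpace ℝ (Fin m)),
      ∃ (z' : EuclideanSpace ℝ (Fin m)) (r : ℝ) (p : ℝ × EuclideanSpace ℝ (Fin m)),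
        z ∈ F → 0 < η →
        z' ∈ F ∧ 0 < r ∧ p ∈ E ∧ r ≤ p.1 ∧ p.1 ≤ η ∧
        ‖p.2 - z'‖ ≤ 3 * p.1 ∧ ‖z' - z‖ ≤ η ∧ r ≤ ‖z' - a‖ := by
    intro z η a
    by_cases hz : z ∈ F ∧ 0 < η
    · obtain ⟨hzF, hη⟩ := hz
      have hzX : z ∈ conicalLimitSet E := by rw [hXE]; exact hFX hzF
      obtain ⟨C, hC, w, hwE, hwt, hwv, hwb⟩ := hzX
      obtain ⟨δ₁, hδ₁, hgd₁⟩ := hgood hzF (1 / C) (by positivity)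
      have hcpos : (0 : ℝ) < min (δ₁ / C) (η / (C + 2)) := by positivity
      obtain ⟨n, hn⟩ := (hwt.eventually (gt_mem_nhds hcpos)).exists
      set t : ℝ := (w n).1 with ht_def
      set v : EuclideanSpace ℝ (Fin m) := (w n).2 with hv_def
      have ht0 : 0 < t := hE (hwE n)
      have htδ : t < δ₁ / C := lt_of_lt_of_le hn (min_le_left _ _)
      have htη : t < η / (C + 2) := lt_of_lt_of_le hn (min_le_right _ _)
      have hvz : ‖v - z‖ ≤ C * t := hwb n
      -- capture step
      have capture : ∃ z₁ ∈ F, ‖v - z₁‖ ≤ t ∧ ‖z₁ - z‖ ≤ (C + 1) * t := by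
        by_cases hvzeq : v = z
        · refine ⟨z, hzF, by simp [hvzeq, ht0.le], ?_⟩
          simp only [sub_self, norm_zero]
          positivity
        · have h1 : 0 < ‖v - z‖ := by
            rw [norm_pos_iff]; exact sub_ne_zero.mpr hvzeq
          have h2 : ‖v - z‖ < δ₁ := by
            calc ‖v - z‖ ≤ C * t := hvz
            _ < C * (δ₁ / C) := mul_lt_mul_of_pos_left htδ hC
            _ = δ₁ := by field_simp
          obtain ⟨x, hxF, hx⟩ := hgd₁ v h1 h2
          have h5 : ‖x - v‖ ≤ t := by
            have h6 : (1 / C) * ‖v - z‖ ≤ (1 / C) * (C * t) :=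
              mul_le_mul_of_nonneg_left hvz (by positivity)
            have h3 : (1 / C) * (C * t) = t := by field_simp
            exact hx.le.trans (h6.trans h3.le)
          refine ⟨x, hxF, by rw [norm_sub_rev]; exact h5, ?_⟩
          have h4 : ‖x - z‖ ≤ ‖x - v‖ + ‖v - z‖ := ntri x v z
          nlinarith
      obtain ⟨z₁, hz₁F, hvz₁, hz₁z⟩ := capture
      -- spread step
      obtain ⟨δ₂, hδ₂, hgd₂⟩ := hgood hz₁F (1 / 2) one_half_pos
      set ρ : ℝ := min δ₂ t / 2 with hρ_def
      have hρ : 0 < ρ := by positivity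
      have hρδ : ρ < δ₂ := by
        have h7 : min δ₂ t ≤ δ₂ := min_le_left _ _
        rw [hρ_def]; linarith
      have hρt : ρ ≤ t / 2 := by
        have h7 : min δ₂ t ≤ t := min_le_right _ _
        rw [hρ_def]; linarith
      have hu : ∀ s : ℝ, s = ρ ∨ s = -ρ → ‖(z₁ + s • e) - z₁‖ = ρ := by
        intro s hs
        have h8 : (z₁ + s • e) - z₁ = s • e := by abel
        rw [h8, norm_smul, he, mul_one, Real.norm_eq_abs]
        rcases hs with rfl | rfl
        · exact abs_of_pos hρ
        · rw [abs_neg]; exact abs_of_pos hρ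
      have hget : ∀ s : ℝ, s = ρ ∨ s = -ρ → ∃ x ∈ F, ‖x - (z₁ + s • e)‖ < ρ / 2 := by
        intro s hs
        obtain ⟨x, hxF, hx⟩ := hgd₂ (z₁ + s • e)
          (by rw [hu s hs]; exact hρ) (by rw [hu s hs]; exact hρδ)
        rw [hu s hs] at hx
        exact ⟨x, hxF, by linarith⟩
      obtain ⟨x₀, hx₀F, hx₀⟩ := hget ρ (Or.inl rfl)
      obtain ⟨x₁, hx₁F, hx₁⟩ := hget (-ρ) (Or.inr rfl)
      have hsep : ρ ≤ ‖x₀ - x₁‖ := by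
        have h01 : ‖(z₁ + ρ • e) - (z₁ + (-ρ) • e)‖ = 2 * ρ := by
          have h9 : (z₁ + ρ • e) - (z₁ + (-ρ) • e) = (2 * ρ) • e := by
            rw [two_mul]; module
          rw [h9, norm_smul, he, mul_one, Real.norm_eq_abs, abs_of_pos (by linarith)]
        have t1 : ‖(z₁ + ρ • e) - (z₁ + (-ρ) • e)‖ ≤
            ‖(z₁ + ρ • e) - x₀‖ + ‖x₀ - (z₁ + (-ρ) • e)‖ := ntri _ _ _
        have t2 : ‖x₀ - (z₁ + (-ρ) • e)‖ ≤ ‖x₀ - x₁‖ + ‖x₁ - (z₁ + (-ρ) • e)‖ := ntri _ _ _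
        have t3 : ‖(z₁ + ρ • e) - x₀‖ = ‖x₀ - (z₁ + ρ • e)‖ := norm_sub_rev _ _
        linarith
      have hfar : ρ / 2 ≤ ‖x₀ - a‖ ∨ ρ / 2 ≤ ‖x₁ - a‖ := by
        by_contra hcon
        push_neg at hcon
        obtain ⟨hc0, hc1⟩ := hcon
        have h10 : ‖x₀ - x₁‖ ≤ ‖x₀ - a‖ + ‖a - x₁‖ := ntri _ _ _
        rw [norm_sub_rev a x₁] at h10
        linarith
      -- choose the far child
      have hchild : ∃ s : ℝ, (s = ρ ∨ s = -ρ) ∧ ∃ x' ∈ F,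
          ‖x' - (z₁ + s • e)‖ < ρ / 2 ∧ ρ / 2 ≤ ‖x' - a‖ := by
        rcases hfar with h | h
        · exact ⟨ρ, Or.inl rfl, x₀, hx₀F, hx₀, h⟩
        · exact ⟨-ρ, Or.inr rfl, x₁, hx₁F, hx₁, h⟩
      obtain ⟨s, hss, x', hx'F, hx'u, hx'a⟩ := hchild
      have hx'z₁ : ‖x' - z₁‖ ≤ 3 / 2 * ρ := by
        have h1 : ‖x' - z₁‖ ≤ ‖x' - (z₁ + s • e)‖ + ‖(z₁ + s • e) - z₁‖ := ntri _ _ _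
        rw [hu s hss] at h1
        linarith
      have hCt : (C + 2) * t ≤ η := by
        have h12 : t * (C + 2) < η := by
          have h13 := htη
          rw [lt_div_iff₀ (by positivity : (0:ℝ) < C + 2)] at h13
          exact h13
        nlinarith
      have hρ2 : (0 : ℝ) < ρ / 2 := by linarith
      have goal1 : ρ / 2 ≤ t := by linarith
      have goal2 : t ≤ η := by nlinarith [mul_pos hC ht0]
      have goal3 : ‖v - x'‖ ≤ 3 * t := by
        have h1 : ‖v - x'‖ ≤ ‖v - z₁‖ + ‖z₁ - x'‖ := ntri _ _ _
        rw [norm_sub_rev z₁ x'] at h1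
        linarith
      have goal4 : ‖x' - z‖ ≤ η := by
        have h1 : ‖x' - z‖ ≤ ‖x' - z₁‖ + ‖z₁ - z‖ := ntri _ _ _
        nlinarith
      exact ⟨x', ρ / 2, w n, fun _ _ => ⟨hx'F, hρ2, hwE n, goal1, goal2, goal3, goal4, hx'a⟩⟩
    · exact ⟨z, 1, (1, z), fun h1 h2 => absurd ⟨h1, h2⟩ hz⟩
  choose Z R P hstep using step
  -- the recursive sequence of states (point, scale)
  obtain ⟨g, hg0, hgs⟩ : ∃ g : ℕ → EuclideanSpace ℝ (Fin m) × ℝ, g 0 = (z₀, 1) ∧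
      ∀ n, g (n + 1) = (Z (g n).1 (g n).2 (f n),
        min (R (g n).1 (g n).2 (f n)) (g n).2 / 4) :=
    ⟨fun n => Nat.rec (motive := fun _ => EuclideanSpace ℝ (Fin m) × ℝ) (z₀, 1)
      (fun n s => (Z s.1 s.2 (f n), min (R s.1 s.2 (f n)) s.2 / 4)) n, rfl, fun n => rfl⟩
  -- invariant
  have hinv : ∀ n, (g n).1 ∈ F ∧ 0 < (g n).2 := by
    intro n
    induction n with
    | zero => rw [hg0]; exact ⟨hz₀F, one_pos⟩
    | succ k ih =>
      have H := hstep (g k).1 (g k).2 (f k) ih.1 ih.2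
      rw [hgs k]
      refine ⟨H.1, ?_⟩
      have h1 := H.2.1
      have h2 := ih.2
      simp only
      have h3 : 0 < min (R (g k).1 (g k).2 (f k)) (g k).2 := lt_min h1 h2
      linarith
  have H : ∀ n, (g (n + 1)).1 ∈ F ∧ 0 < R (g n).1 (g n).2 (f n) ∧
      P (g n).1 (g n).2 (f n) ∈ E ∧
      R (g n).1 (g n).2 (f n) ≤ (P (g n).1 (g n).2 (f n)).1 ∧
      (P (g n).1 (g n).2 (f n)).1 ≤ (g n).2 ∧
      ‖(P (g n).1 (g n).2 (f n)).2 - (g (n + 1)).1‖ ≤ 3 * (P (g n).1 (g n).2 (f n)).1 ∧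
      ‖(g (n + 1)).1 - (g n).1‖ ≤ (g n).2 ∧
      R (g n).1 (g n).2 (f n) ≤ ‖(g (n + 1)).1 - f n‖ := by
    intro n
    have h := hstep (g n).1 (g n).2 (f n) (hinv n).1 (hinv n).2
    rw [hgs n]
    exact h
  -- scale bounds
  have hη4 : ∀ n, (g (n + 1)).2 ≤ (g n).2 / 4 := by
    intro n
    rw [hgs n]
    simp only
    have h1 : min (R (g n).1 (g n).2 (f n)) (g n).2 ≤ (g n).2 := min_le_right _ _
    linarith
  have hηr : ∀ n, (g (n + 1)).2 ≤ R (g n).1 (g n).2 (f n) / 4 := by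
    intro n
    rw [hgs n]
    simp only
    have h1 : min (R (g n).1 (g n).2 (f n)) (g n).2 ≤ R (g n).1 (g n).2 (f n) := min_le_left _ _
    linarith
  have hηgeo : ∀ n, (g n).2 ≤ (1 / 4 : ℝ) ^ n := by
    intro n
    induction n with
    | zero => simp [hg0]
    | succ k ih =>
      have h1 := hη4 k
      calc (g (k + 1)).2 ≤ (g k).2 / 4 := h1
      _ ≤ (1 / 4 : ℝ) ^ k / 4 := by linarith
      _ = (1 / 4 : ℝ) ^ (k + 1) := by ring
  -- Cauchy
  have hcauchy : CauchySeq (fun n => (g n).1) := by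
    apply cauchySeq_of_le_geometric (1 / 4 : ℝ) 1 (by norm_num)
    intro n
    rw [dist_comm, dist_eq_norm]
    calc ‖(g (n + 1)).1 - (g n).1‖ ≤ (g n).2 := (H n).2.2.2.2.2.2.1
    _ ≤ (1 / 4 : ℝ) ^ n := hηgeo n
    _ = 1 * (1 / 4 : ℝ) ^ n := (one_mul _).symm
  obtain ⟨zlim, hzlim⟩ := cauchySeq_tendsto_of_complete hcauchy
  -- tail bound
  have htail : ∀ k n, dist ((g (n + k)).1) ((g n).1) ≤ 2 * (g n).2 := by
    intro k
    induction k with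
    | zero =>
      intro n
      simp only [Nat.add_zero, dist_self]
      have := (hinv n).2
      linarith
    | succ j ih =>
      intro n
      have h1 : n + (j + 1) = (n + 1) + j := by omega
      rw [h1]
      calc dist ((g ((n + 1) + j)).1) ((g n).1)
          ≤ dist ((g ((n + 1) + j)).1) ((g (n + 1)).1) + dist ((g (n + 1)).1) ((g n).1) :=
            dist_triangle _ _ _
        _ ≤ 2 * (g (n + 1)).2 + (g n).2 := by
            have h2 : dist ((g (n + 1)).1) ((g n).1) ≤ (g n).2 := by
              rw [dist_eq_norm]; exact (H n).2.2.2.2.2.2.1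
            linarith [ih (n + 1)]
        _ ≤ 2 * (g n).2 := by
            have h3 := hη4 n
            have h4 := (hinv n).2
            linarith
  have hlim : ∀ n, dist zlim ((g n).1) ≤ 2 * (g n).2 := by
    intro n
    have h1 : Tendsto (fun k => (g (k + n)).1) atTop (𝓝 zlim) :=
      hzlim.comp (tendsto_add_atTop_nat n)
    have h2 : Tendsto (fun k => dist ((g (k + n)).1) ((g n).1)) atTop
        (𝓝 (dist zlim ((g n).1))) := h1.dist tendsto_const_nhds
    exact le_of_tendsto h2 (Eventually.of_forall fun k => by
      rw [add_comm k n]; exact htail k n)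
  -- the limit is a conical limit point
  have hzlimX : zlim ∈ X := by
    rw [← hXE]
    refine ⟨4, by norm_num, fun n => P (g n).1 (g n).2 (f n),
      fun n => (H n).2.2.1, ?_, ?_, ?_⟩
    · apply squeeze_zero (fun n => (hEpos ((H n).2.2.1)).le)
        (fun n => ((H n).2.2.2.2.1).trans (hηgeo n))
      exact tendsto_pow_atTop_nhds_zero_of_lt_one (by norm_num) (by norm_num)
    · rw [tendsto_iff_dist_tendsto_zero]
      apply squeeze_zero (fun n => dist_nonneg) (g := fun n => 4 * (1 / 4 : ℝ) ^ n)
      · intro n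
        have h1 : dist ((P (g n).1 (g n).2 (f n)).2) zlim ≤
            dist ((P (g n).1 (g n).2 (f n)).2) ((g (n + 1)).1) + dist ((g (n + 1)).1) zlim :=
          dist_triangle _ _ _
        have h2 : dist ((P (g n).1 (g n).2 (f n)).2) ((g (n + 1)).1) ≤
            3 * (P (g n).1 (g n).2 (f n)).1 := by
          rw [dist_eq_norm]; exact (H n).2.2.2.2.2.1
        have h3 : dist ((g (n + 1)).1) zlim ≤ 2 * (g (n + 1)).2 := by
          rw [dist_comm]; exact hlim (n + 1)
        have h4 := hη4 n
        have h5 := (H n).2.2.2.2.1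
        have h6 := hηgeo n
        calc dist ((P (g n).1 (g n).2 (f n)).2) zlim
            ≤ 3 * (P (g n).1 (g n).2 (f n)).1 + 2 * (g (n + 1)).2 := by linarith
          _ ≤ 3 * (g n).2 + 2 * ((g n).2 / 4) := by linarith
          _ ≤ 4 * (g n).2 := by linarith [(hinv n).2]
          _ ≤ 4 * (1 / 4 : ℝ) ^ n := by linarith
      · have h7 : Tendsto (fun n : ℕ => (1 / 4 : ℝ) ^ n) atTop (𝓝 0) :=
          tendsto_pow_atTop_nhds_zero_of_lt_one (by norm_num) (by norm_num)
        have := h7.const_mul (4 : ℝ)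
        simpa using this
    · intro n
      have h1 : ‖(P (g n).1 (g n).2 (f n)).2 - zlim‖ ≤
          ‖(P (g n).1 (g n).2 (f n)).2 - (g (n + 1)).1‖ + ‖(g (n + 1)).1 - zlim‖ := ntri _ _ _
      have h2 := (H n).2.2.2.2.2.1
      have h3 : ‖(g (n + 1)).1 - zlim‖ ≤ 2 * (g (n + 1)).2 := by
        rw [← dist_eq_norm, dist_comm]; exact hlim (n + 1)
      have h4 := hηr n
      have h5 := (H n).2.2.2.1
      have h6 := (hEpos ((H n).2.2.1)).le
      linarith
  -- but the limit avoids every f n : contradiction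
  rw [hf] at hzlimX
  obtain ⟨n, hn⟩ := hzlimX
  have h1 := (H n).2.2.2.2.2.2.2
  have h2 : ‖(g (n + 1)).1 - f n‖ ≤ 2 * (g (n + 1)).2 := by
    rw [hn, ← dist_eq_norm, dist_comm]
    exact hlim (n + 1)
  have h3 := hηr n
  have h4 := (H n).2.1
  linarith
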